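/- Assume S is finite and let e_S = e_W = ∏_{s∈S} e_s ∈ C_W(u). Then e_W is a central idempotent of C_W(u), and the assignment T_w ↦ g_w e_W defines a k-algebra morphism 𝔮 : H_W(u) → C_W(u) (with unit 1 ↦ e_W replaced appropriately, i.e. a morphism of non-unital k-algebras into C_W(u), unital onto the corner e_W C_W(u)) which is a splitting of 𝔭, i.e. 𝔭 ∘ 𝔮 = id on H_W(u). -/

import Mathlib

open scoped Classical

noncomputable section

namespace CWpaper

variable {B : Type} {M : CoxeterMatrix B} {W : Type} [Group W] (cs : CoxeterSystem M W)
variable (k : Type) [CommRing k]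

/-- The set of reflections of the Coxeter system, as a subtype. -/
abbrev Refl := {t : W // cs.IsReflection t}

/-- Index type for the generators of `C_W(u)`: `inl i` indexes `g` generators,
`inr t` indexes `e` generators. -/
abbrev Gen := B ⊕ Refl cs

/-- The free-algebra generator corresponding to `g_s`. -/
def gf (i : B) : FreeAlgebra k (Gen cs) := FreeAlgebra.ι k (Sum.inl i)

/-- The free-algebra generator corresponding to `e_t`. -/
def ef (t : Refl cs) : FreeAlgebra k (Gen cs) := FreeAlgebra.ι k (Sum.inr t)

/-- A simple reflection, as a reflection. -/
def simpleR (i : B) : Refl cs := ⟨cs.simple i, cs.isReflection_simple i⟩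

/-- Conjugate of a reflection by a group element. -/
def conjR (w : W) (t : Refl cs) : Refl cs := ⟨w * t.1 * w⁻¹, t.2.conj w⟩

/-- The defining relations of the algebra `C_W(u)`. -/
inductive CWrel (u : B → k) : FreeAlgebra k (Gen cs) → FreeAlgebra k (Gen cs) → Prop
  | braid (i j : B) (h : M i j ≠ 0) :
      CWrel u (((CoxeterSystem.alternatingWord i j (M i j)).map (gf cs k)).prod)
              (((CoxeterSystem.alternatingWord j i (M i j)).map (gf cs k)).prod)
  | idem (t : Refl cs) : CWrel u (ef cs k t * ef cs k t) (ef cs k t)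
  | comm (t₁ t₂ : Refl cs) : CWrel u (ef cs k t₁ * ef cs k t₂) (ef cs k t₂ * ef cs k t₁)
  | conj (t t₁ : Refl cs) :
      CWrel u (ef cs k t * ef cs k t₁) (ef cs k t * ef cs k (conjR cs t.1 t₁))
  | move (i : B) (t : Refl cs) :
      CWrel u (gf cs k i * ef cs k t) (ef cs k (conjR cs (cs.simple i) t) * gf cs k i)
  | quad (i : B) :
      CWrel u (gf cs k i * gf cs k i)
        (1 + algebraMap k _ (u i - 1) * ef cs k (simpleR cs i) * (1 + gf cs k i))

variable (u : B → k)

/-- The algebra `C_W(u)`. -/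
abbrev CW := RingQuot (CWrel cs k u)

/-- The generator `g_s` of `C_W(u)`. -/
def gCW (i : B) : CW cs k u := RingQuot.mkAlgHom k (CWrel cs k u) (gf cs k i)

/-- The generator `e_t` of `C_W(u)`. -/
def eCW (t : Refl cs) : CW cs k u := RingQuot.mkAlgHom k (CWrel cs k u) (ef cs k t)

theorem eCW_commute (t₁ t₂ : Refl cs) : Commute (eCW cs k u t₁) (eCW cs k u t₂) := by
  have h := RingQuot.mkAlgHom_rel k (CWrel.comm (cs := cs) (k := k) (u := u) t₁ t₂)
  simp only [map_mul] at h
  exact h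

/-- The product `e_J = ∏_{t ∈ J} e_t` for a finite set of reflections `J`. -/
def eJ (J : Finset (Refl cs)) : CW cs k u :=
  J.noncommProd (eCW cs k u) (fun t₁ _ t₂ _ _ => eCW_commute cs k u t₁ t₂)

/-- `gg : W → C_W(u)` is the family `(g_w)_{w ∈ W}` iff for every reduced word
`l` for `w`, `gg w` is the product of the `g_s`, `s ∈ l`. -/
def IsGFamily (gg : W → CW cs k u) : Prop :=
  ∀ l : List B, cs.IsReduced l → gg (cs.wordProd l) = (l.map (gCW cs k u)).prod

end CWpaper

namespace CWpaper

/-- The defining relations of the Iwahori–Hecke algebra `H_W(u)`. -/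
inductive Hrel {B : Type} (M : CoxeterMatrix B) (k : Type) [CommRing k] (u : B → k) :
    FreeAlgebra k B → FreeAlgebra k B → Prop
  | braid (i j : B) (h : M i j ≠ 0) :
      Hrel M k u (((CoxeterSystem.alternatingWord i j (M i j)).map (FreeAlgebra.ι k)).prod)
                 (((CoxeterSystem.alternatingWord j i (M i j)).map (FreeAlgebra.ι k)).prod)
  | quad (i : B) :
      Hrel M k u (FreeAlgebra.ι k i * FreeAlgebra.ι k i)
        (algebraMap k _ (u i) + algebraMap k _ (u i - 1) * FreeAlgebra.ι k i)

/-- The Iwahori–Hecke algebra `H_W(u)`. -/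
abbrev HW {B : Type} (M : CoxeterMatrix B) (k : Type) [CommRing k] (u : B → k) :=
  RingQuot (Hrel M k u)

/-- The generator `T_s` of the Iwahori–Hecke algebra. -/
def THW {B : Type} (M : CoxeterMatrix B) (k : Type) [CommRing k] (u : B → k) (i : B) :
    HW M k u :=
  RingQuot.mkAlgHom k (Hrel M k u) (FreeAlgebra.ι k i)

end CWpaper

namespace CWpaper

/-- The idempotent `e_S = e_W = ∏_{s ∈ S} e_s` (for `S` finite). -/
def eTop {B : Type} {M : CoxeterMatrix B} {W : Type} [Group W] (cs : CoxeterSystem M W)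
    (k : Type) [CommRing k] (u : B → k) [Fintype B] : CW cs k u :=
  eJ cs k u (Finset.univ.image (simpleR cs))

end CWpaper

/-!
Relation (4) says `e_s e_t = e_s e_{sts}`. Hence a product `e_J` over a set `J` containing every
simple reflection absorbs `e_{sts}` as soon as it absorbs `e_t`; since it absorbs each `e_s`,
induction on word length gives `e_J e_t = e_J` for every reflection `t`, so `e_J` is idempotent.
By relation (5), `g_s e_J = (∏_{t ∈ J} e_{sts}) g_s`, and relation (4) identifies that product
with `e_J` because `e_s` is a factor of both; so `e_J` is central. Multiplication by the central
idempotent `e_W` is then a non-unital algebra morphism onto the corner `e_W C_W(u)`, where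
`e_W e_s = e_W` turns relation (6) into the quadratic Hecke relation; so `T_s ↦ g_s e_W` induces
`𝔮`. Finally `𝔭 (e_W) = 1` gives `𝔭 (𝔮 T_s) = T_s`.
-/

namespace Finset

variable {α β : Type*} [Monoid β] {s : Finset α} {f f' : α → β}

theorem noncommProd_mul_of_isIdempotentElem {a : α} (ha : a ∈ s)
    (hf : IsIdempotentElem (f a)) (comm) : s.noncommProd f comm * f a = s.noncommProd f comm := by
  classical
  rw [← noncommProd_erase_mul s ha f comm, mul_assoc, hf.eq]

theorem mul_noncommProd_eq_self {x : β} (h : ∀ a ∈ s, x * f a = x) (comm) :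
    x * s.noncommProd f comm = x :=
  noncommProd_induction s f comm (fun y => x * y = x)
    (fun a b ha hb => by rw [← mul_assoc, ha, hb]) (mul_one x) h

theorem semiconjBy_noncommProd {g : β} (h : ∀ a ∈ s, SemiconjBy g (f a) (f' a)) (comm comm') :
    SemiconjBy g (s.noncommProd f comm) (s.noncommProd f' comm') := by
  induction s using Finset.cons_induction with
  | empty => exact SemiconjBy.one_right g
  | cons a s ha ih =>
    rw [noncommProd_cons, noncommProd_cons]
    exact (h a (mem_cons_self a s)).mul_right (ih (fun b hb => h b (mem_cons_of_mem hb)) _ _)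

theorem mul_noncommProd_eq_mul_noncommProd {e : β} (hc : ∀ a ∈ s, Commute e (f a))
    (h : ∀ a ∈ s, e * f a = e * f' a) (comm comm') :
    e * s.noncommProd f comm = e * s.noncommProd f' comm' := by
  induction s using Finset.cons_induction with
  | empty => rfl
  | cons a s ha ih =>
    rw [noncommProd_cons, noncommProd_cons, ← mul_assoc, ← mul_assoc,
      ← h a (mem_cons_self a s), (hc a (mem_cons_self a s)).eq, mul_assoc, mul_assoc,
      ih (fun b hb => hc b (mem_cons_of_mem hb)) (fun b hb => h b (mem_cons_of_mem hb))]

end Finset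

namespace RingQuot

variable {S A B : Type*} [CommSemiring S] [Semiring A] [Algebra S A] [NonUnitalSemiring B]
  [Module S B] {s : A → A → Prop}

theorem Rel.map_eq {F : Type*} [FunLike F A B] [AddHomClass F A B] [MulHomClass F A B] (f : F)
    (hf : ∀ ⦃x y⦄, s x y → f x = f y) {x y : A} (h : Rel s x y) : f x = f y := by
  induction h with
  | of h => exact hf h
  | add_left _ ih => rw [map_add, map_add, ih]
  | mul_left _ ih => rw [map_mul, map_mul, ih]
  | mul_right _ ih => rw [map_mul, map_mul, ih]

def liftNonUnitalAlgHom (f : A →ₙₐ[S] B) (hf : ∀ ⦃x y⦄, s x y → f x = f y) :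
    RingQuot s →ₙₐ[S] B where
  toFun x := Quot.lift f (fun _ _ h => Rel.map_eq f hf h) x.toQuot
  map_smul' := by
    rintro c ⟨⟨a⟩⟩
    rw [smul_quot]
    exact map_smul f c a
  map_zero' := by
    rw [← zero_quot]
    exact map_zero f
  map_add' := by
    rintro ⟨⟨a⟩⟩ ⟨⟨b⟩⟩
    rw [add_quot]
    exact map_add f a b
  map_mul' := by
    rintro ⟨⟨a⟩⟩ ⟨⟨b⟩⟩
    rw [mul_quot]
    exact map_mul f a b

theorem liftNonUnitalAlgHom_mkAlgHom_apply (f : A →ₙₐ[S] B) (hf : ∀ ⦃x y⦄, s x y → f x = f y)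
    (x : A) : liftNonUnitalAlgHom f hf (mkAlgHom S s x) = f x := by
  change liftNonUnitalAlgHom f hf ((mkAlgHom S s : A →+* RingQuot s) x) = f x
  rw [mkAlgHom_coe, mkRingHom_def]
  rfl

end RingQuot

def NonUnitalAlgHom.mulLeftOfCentralIdempotent {R A : Type*} [CommSemiring R] [Semiring A]
    [Algebra R A] {e : A} (he : IsIdempotentElem e) (hc : ∀ x, Commute e x) : A →ₙₐ[R] A where
  toFun x := e * x
  map_smul' r x := mul_smul_comm r e x
  map_zero' := mul_zero e
  map_add' := mul_add e
  map_mul' x y := by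
    change e * (x * y) = e * x * (e * y)
    rw [mul_assoc, ← mul_assoc x, ← (hc x).eq, ← mul_assoc, ← mul_assoc, ← mul_assoc, he.eq]

namespace CWpaper

section Relations

variable {B : Type} {M : CoxeterMatrix B} {W : Type} [Group W] (cs : CoxeterSystem M W)
  (k : Type) [CommRing k] (u : B → k)

theorem isIdempotentElem_eCW (t : Refl cs) : IsIdempotentElem (eCW cs k u t) := by
  have hrel := RingQuot.mkAlgHom_rel k (CWrel.idem (cs := cs) (k := k) (u := u) t)
  rw [map_mul] at hrel
  exact hrel

theorem eCW_mul_eCW_conjR (t t₁ : Refl cs) :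
    eCW cs k u t * eCW cs k u t₁ = eCW cs k u t * eCW cs k u (conjR cs t.1 t₁) := by
  have hrel := RingQuot.mkAlgHom_rel k (CWrel.conj (cs := cs) (k := k) (u := u) t t₁)
  rw [map_mul, map_mul] at hrel
  exact hrel

theorem semiconjBy_gCW_eCW (i : B) (t : Refl cs) :
    SemiconjBy (gCW cs k u i) (eCW cs k u t) (eCW cs k u (conjR cs (cs.simple i) t)) := by
  have hrel := RingQuot.mkAlgHom_rel k (CWrel.move (cs := cs) (k := k) (u := u) i t)
  rw [map_mul, map_mul] at hrel
  exact hrel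

theorem gCW_mul_self (i : B) :
    gCW cs k u i * gCW cs k u i =
      1 + algebraMap k _ (u i - 1) * eCW cs k u (simpleR cs i) * (1 + gCW cs k u i) := by
  have hrel := RingQuot.mkAlgHom_rel k (CWrel.quad (cs := cs) (k := k) (u := u) i)
  simp only [map_mul, map_add, map_one, AlgHom.commutes] at hrel
  exact hrel

theorem gCW_braid (i j : B) (h : M i j ≠ 0) :
    ((CoxeterSystem.alternatingWord i j (M i j)).map (gCW cs k u)).prod =
      ((CoxeterSystem.alternatingWord j i (M i j)).map (gCW cs k u)).prod := by
  have hrel := RingQuot.mkAlgHom_rel k (CWrel.braid (cs := cs) (k := k) (u := u) i j h)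
  simp only [map_list_prod, List.map_map] at hrel
  exact hrel

theorem commute_of_commute_gCW_of_commute_eCW {x : CW cs k u}
    (hg : ∀ i, Commute x (gCW cs k u i)) (he : ∀ t, Commute x (eCW cs k u t)) (y : CW cs k u) :
    Commute x y := by
  obtain ⟨a, rfl⟩ := RingQuot.mkAlgHom_surjective k (CWrel cs k u) y
  induction a using FreeAlgebra.induction with
  | grade0 r => rw [AlgHom.commutes]; exact Algebra.commute_algebraMap_right r x
  | grade1 g =>
    cases g with
    | inl i => exact hg i
    | inr t => exact he t
  | mul a b ha hb => rw [map_mul]; exact ha.mul_right hb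
  | add a b ha hb => rw [map_add]; exact ha.add_right hb

theorem conjR_one (t : Refl cs) : conjR cs 1 t = t :=
  Subtype.ext (by simp [conjR])

theorem conjR_mul (w w' : W) (t : Refl cs) : conjR cs (w * w') t = conjR cs w (conjR cs w' t) :=
  Subtype.ext (by simp only [conjR, mul_inv_rev, mul_assoc])

theorem conjR_simple_simpleR (i : B) : conjR cs (cs.simple i) (simpleR cs i) = simpleR cs i :=
  Subtype.ext (by simp [conjR, simpleR])

end Relations

section Idempotent

variable {B : Type} {M : CoxeterMatrix B} {W : Type} [Group W] (cs : CoxeterSystem M W)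
  (k : Type) [CommRing k] (u : B → k) {J : Finset (Refl cs)}

theorem eCW_commute_eJ (t : Refl cs) : Commute (eCW cs k u t) (eJ cs k u J) :=
  J.noncommProd_commute _ _ _ fun t' _ => eCW_commute cs k u t t'

theorem eJ_mul_eCW_of_mem {t : Refl cs} (ht : t ∈ J) :
    eJ cs k u J * eCW cs k u t = eJ cs k u J :=
  J.noncommProd_mul_of_isIdempotentElem ht (isIdempotentElem_eCW cs k u t) _

theorem eJ_mul_eCW_conjR_simple (hJ : ∀ i, simpleR cs i ∈ J) (i : B) (t : Refl cs) :
    eJ cs k u J * eCW cs k u (conjR cs (cs.simple i) t) = eJ cs k u J * eCW cs k u t :=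
  calc eJ cs k u J * eCW cs k u (conjR cs (cs.simple i) t)
      = eJ cs k u J * eCW cs k u (simpleR cs i) * eCW cs k u (conjR cs (cs.simple i) t) := by
        rw [eJ_mul_eCW_of_mem cs k u (hJ i)]
    _ = eJ cs k u J * eCW cs k u (simpleR cs i) * eCW cs k u t := by
        rw [mul_assoc, mul_assoc, eCW_mul_eCW_conjR cs k u (simpleR cs i) t]
        rfl
    _ = eJ cs k u J * eCW cs k u t := by rw [eJ_mul_eCW_of_mem cs k u (hJ i)]

theorem eJ_mul_eCW (hJ : ∀ i, simpleR cs i ∈ J) (t : Refl cs) :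
    eJ cs k u J * eCW cs k u t = eJ cs k u J := by
  obtain ⟨w, i, ht⟩ := t.2
  obtain ⟨l, rfl⟩ := cs.wordProd_surjective w
  obtain rfl : t = conjR cs (cs.wordProd l) (simpleR cs i) := Subtype.ext ht
  clear ht
  induction l with
  | nil => rw [cs.wordProd_nil, conjR_one, eJ_mul_eCW_of_mem cs k u (hJ i)]
  | cons j l ih => rw [cs.wordProd_cons, conjR_mul, eJ_mul_eCW_conjR_simple cs k u hJ, ih]

theorem isIdempotentElem_eJ (hJ : ∀ i, simpleR cs i ∈ J) : IsIdempotentElem (eJ cs k u J) :=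
  J.mul_noncommProd_eq_self (fun t _ => eJ_mul_eCW cs k u hJ t) _

theorem gCW_commute_eJ (hJ : ∀ i, simpleR cs i ∈ J) (i : B) :
    Commute (gCW cs k u i) (eJ cs k u J) := by
  let f t := eCW cs k u (conjR cs (cs.simple i) t)
  have hf : (J : Set (Refl cs)).Pairwise (Function.onFun Commute f) :=
    fun _ _ _ _ _ => eCW_commute ..
  let P := J.noncommProd f hf
  have hgP : SemiconjBy (gCW cs k u i) (eJ cs k u J) P :=
    J.semiconjBy_noncommProd (fun t _ => semiconjBy_gCW_eCW cs k u i t) _ _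
  have hfs : f (simpleR cs i) = eCW cs k u (simpleR cs i) :=
    congrArg (eCW cs k u) (conjR_simple_simpleR cs i)
  have hP : P = eJ cs k u J :=
    calc P = P * eCW cs k u (simpleR cs i) :=
          hfs ▸ (J.noncommProd_mul_of_isIdempotentElem (hJ i)
            (hfs ▸ isIdempotentElem_eCW cs k u _) hf).symm
      _ = eCW cs k u (simpleR cs i) * P :=
          (J.noncommProd_commute f hf _ fun _ _ => eCW_commute ..).eq.symm
      _ = eCW cs k u (simpleR cs i) * eJ cs k u J :=
          J.mul_noncommProd_eq_mul_noncommProd (fun _ _ => eCW_commute ..)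
            (fun t _ => (eCW_mul_eCW_conjR cs k u (simpleR cs i) t).symm) _ _
      _ = eJ cs k u J := by rw [(eCW_commute_eJ cs k u _).eq, eJ_mul_eCW_of_mem cs k u (hJ i)]
  rwa [hP] at hgP

theorem commute_eJ (hJ : ∀ i, simpleR cs i ∈ J) (x : CW cs k u) : Commute (eJ cs k u J) x :=
  commute_of_commute_gCW_of_commute_eCW cs k u (fun i => (gCW_commute_eJ cs k u hJ i).symm)
    (fun t => (eCW_commute_eJ cs k u t).symm) x

theorem eJ_mul_lift_gCW_eq_of_hrel (hJ : ∀ i, simpleR cs i ∈ J) {a b : FreeAlgebra k B}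
    (h : Hrel M k u a b) :
    eJ cs k u J * FreeAlgebra.lift k (gCW cs k u) a =
      eJ cs k u J * FreeAlgebra.lift k (gCW cs k u) b := by
  cases h with
  | braid i j hij =>
    rw [map_list_prod, map_list_prod, List.map_map, List.map_map, FreeAlgebra.ι_comp_lift,
      gCW_braid cs k u i j hij]
  | quad i =>
    rw [map_mul, map_add, map_mul, AlgHom.commutes, AlgHom.commutes, FreeAlgebra.lift_ι_apply,
      gCW_mul_self, mul_assoc, ← Algebra.smul_def, ← Algebra.smul_def, mul_add, mul_smul_comm,
      ← mul_assoc, eJ_mul_eCW cs k u hJ, Algebra.algebraMap_eq_smul_one, ← mul_smul_comm,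
      ← mul_add]
    congr 1
    module

theorem map_eJ_eq_one {A : Type*} [Semiring A] [Algebra k A] (p : CW cs k u →ₐ[k] A)
    (hp : ∀ t, p (eCW cs k u t) = 1) : p (eJ cs k u J) = 1 :=
  J.noncommProd_induction _ _ (fun y => p y = 1)
    (fun a b ha hb => by rw [map_mul, ha, hb, one_mul]) (map_one p) fun t _ => hp t

end Idempotent

section Splitting

variable {B : Type} [Fintype B] {M : CoxeterMatrix B} {W : Type} [Group W]
  (cs : CoxeterSystem M W) (k : Type) [CommRing k] (u : B → k)

theorem simpleR_mem_image_univ (i : B) : simpleR cs i ∈ Finset.univ.image (simpleR cs) :=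
  Finset.mem_image_of_mem _ (Finset.mem_univ i)

theorem isIdempotentElem_eTop : IsIdempotentElem (eTop cs k u) :=
  isIdempotentElem_eJ cs k u (simpleR_mem_image_univ cs)

theorem commute_eTop (x : CW cs k u) : Commute (eTop cs k u) x :=
  commute_eJ cs k u (simpleR_mem_image_univ cs) x

/-- The paper's `𝔮`: `T_s ↦ g_s e_W`, through the corner `e_W C_W(u)`. -/
def splitting : HW M k u →ₙₐ[k] CW cs k u :=
  RingQuot.liftNonUnitalAlgHom
    ((NonUnitalAlgHom.mulLeftOfCentralIdempotent (isIdempotentElem_eTop cs k u)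
      (commute_eTop cs k u)).comp (FreeAlgebra.lift k (gCW cs k u)).toNonUnitalAlgHom)
    fun _ _ h => eJ_mul_lift_gCW_eq_of_hrel cs k u (simpleR_mem_image_univ cs) h

theorem splitting_mkAlgHom (x : FreeAlgebra k B) :
    splitting cs k u (RingQuot.mkAlgHom k (Hrel M k u) x) =
      eTop cs k u * FreeAlgebra.lift k (gCW cs k u) x :=
  RingQuot.liftNonUnitalAlgHom_mkAlgHom_apply _ _ x

theorem splitting_list_prod (l : List B) :
    splitting cs k u (l.map (THW M k u)).prod = (l.map (gCW cs k u)).prod * eTop cs k u := by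
  have hT : (l.map (THW M k u)).prod =
      RingQuot.mkAlgHom k (Hrel M k u) (l.map (FreeAlgebra.ι k)).prod := by
    rw [map_list_prod, List.map_map]
    rfl
  rw [hT, splitting_mkAlgHom, map_list_prod, List.map_map, FreeAlgebra.ι_comp_lift]
  exact (commute_eTop cs k u _).eq

theorem map_splitting {p : CW cs k u →ₐ[k] HW M k u}
    (hpg : ∀ i, p (gCW cs k u i) = THW M k u i) (hpe : ∀ t, p (eCW cs k u t) = 1)
    (h : HW M k u) : p (splitting cs k u h) = h := by
  obtain ⟨x, rfl⟩ := RingQuot.mkAlgHom_surjective k (Hrel M k u) h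
  have hlift : p.comp (FreeAlgebra.lift k (gCW cs k u)) = RingQuot.mkAlgHom k (Hrel M k u) :=
    FreeAlgebra.hom_ext (funext fun i => by simp [hpg, THW])
  rw [splitting_mkAlgHom, map_mul, eTop, map_eJ_eq_one cs k u p hpe, one_mul,
    ← AlgHom.comp_apply, hlift]

end Splitting

theorem statement5_general {B : Type} [Fintype B] {M : CoxeterMatrix B} {W : Type} [Group W]
    (cs : CoxeterSystem M W) (k : Type) [CommRing k] (u : B → k)
    (p : CW cs k u →ₐ[k] HW M k u)
    (hpg : ∀ i : B, p (gCW cs k u i) = THW M k u i)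
    (hpe : ∀ t : Refl cs, p (eCW cs k u t) = 1) :
    (∀ x : CW cs k u, eTop cs k u * x = x * eTop cs k u) ∧
    eTop cs k u * eTop cs k u = eTop cs k u ∧
    ∃ q : HW M k u →ₙₐ[k] CW cs k u,
      (∀ l : List B, cs.IsReduced l →
        q ((l.map (THW M k u)).prod) = (l.map (gCW cs k u)).prod * eTop cs k u) ∧
      (∀ h : HW M k u, p (q h) = h) :=
  ⟨fun x => (commute_eTop cs k u x).eq, isIdempotentElem_eTop cs k u, splitting cs k u,
    fun l _ => splitting_list_prod cs k u l, map_splitting cs k u hpg hpe⟩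

/-- For `S` finite, `e_W = ∏_{s∈S} e_s` is a central idempotent of
`C_W(u)`, and `T_w ↦ g_w e_W` defines a non-unital `k`-algebra morphism
`𝔮 : H_W(u) → C_W(u)` splitting `𝔭`, i.e. `𝔭 ∘ 𝔮 = id`. -/
theorem statement5 {B : Type} [Fintype B] {M : CoxeterMatrix B} {W : Type} [Group W]
    (cs : CoxeterSystem M W) (k : Type) [CommRing k] (u : B → k)
    (hu : ∀ i j : B, IsConj (cs.simple i) (cs.simple j) → u i = u j)
    (p : CW cs k u →ₐ[k] HW M k u)
    (hpg : ∀ i : B, p (gCW cs k u i) = THW M k u i)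
    (hpe : ∀ t : Refl cs, p (eCW cs k u t) = 1) :
    (∀ x : CW cs k u, eTop cs k u * x = x * eTop cs k u) ∧
    eTop cs k u * eTop cs k u = eTop cs k u ∧
    ∃ q : HW M k u →ₙₐ[k] CW cs k u,
      (∀ l : List B, cs.IsReduced l →
        q ((l.map (THW M k u)).prod) = (l.map (gCW cs k u)).prod * eTop cs k u) ∧
      (∀ h : HW M k u, p (q h) = h) :=
  statement5_general cs k u p hpg hpe

end CWpaper
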